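/- Variation of the XNOR-neuron pre-activation with respect to a weight: fix Boolean inputs x₁, …, xₘ ∈ B, an integer constant w₀, and define s : Bᵐ → ℤ by s(w) = w₀ + Σᵢ [xnor(xᵢ, wᵢ)], where [·] maps T to 1 and F to 0. Then for every j and every w ∈ Bᵐ, the partial variation of s with respect to w_j equals e(x_j), i.e., it is +1 if x_j = T and -1 if x_j = F. -/

import Mathlib

/-!
Flipping `w_j` changes only the `j`-th summand, by `[x_j == ¬w_j] - [x_j == w_j] = ±1`;
the sign of `δ(w_j → ¬w_j)` agrees with that change exactly when `x_j = T`, so their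
XNOR is `e(x_j)`.
-/

/-- The three-valued logic `M = {T, 0, F}`. -/
inductive Tri where
  | T : Tri
  | Z : Tri
  | F : Tri
deriving DecidableEq

/-- Inclusion of the Boolean set `B = {T, F}` into `M`. -/
def Tri.ofBool : Bool → Tri
  | true => .T
  | false => .F

/-- Integer embedding `e : M → ℤ`, with `e(T) = 1`, `e(0) = 0`, `e(F) = -1`. -/
def Tri.e : Tri → ℤ
  | .T => 1
  | .Z => 0
  | .F => -1

/-- Mixed-type XNOR of `a ∈ M` with an integer `z`:
`z` if `a = T`, `0` if `a = 0`, `-z` if `a = F`. -/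
def mxnorZ : Tri → ℤ → ℤ
  | .T, z => z
  | .Z, _ => 0
  | .F, z => -z

/-- Variation `δ(x → y)` of a Boolean `x` to `y`, with order `F < T`
(`false < true`): `T` if `y > x`, `0` if `y = x`, `F` if `y < x`. -/
def bvar (x y : Bool) : Tri :=
  if x = y then .Z else if y then .T else .F

/-- `[·] : B → ℤ` mapping `T` to `1` and `F` to `0`. -/
def ind (b : Bool) : ℤ :=
  if b then 1 else 0

/-- Partial variation of `f : Bᵐ → ℤ` with respect to the `j`-th coordinate:
`f'_j(w) = xnor(δ(w_j → ¬w_j), f(w_{¬j}) - f(w))`. -/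
def varZi {m : ℕ} (f : (Fin m → Bool) → ℤ) (j : Fin m) (w : Fin m → Bool) : ℤ :=
  mxnorZ (bvar (w j) (!(w j))) (f (Function.update w j (!(w j))) - f w)

theorem Tri.mxnorZ_eq_e_mul (a : Tri) (z : ℤ) : mxnorZ a z = a.e * z := by
  cases a <;> simp [mxnorZ, Tri.e]

theorem bvar_self_not (b : Bool) : bvar b (!b) = Tri.ofBool (!b) := by
  cases b <;> rfl

theorem Fintype.sum_apply_update_sub {ι α G : Type*} [Fintype ι] [DecidableEq ι]
    [AddCommGroup G] (g : ι → α → G) (w : ι → α) (j : ι) (a : α) :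
    ∑ i, g i (Function.update w j a i) - ∑ i, g i (w i) = g j a - g j (w j) := by
  rw [← Finset.sum_sub_distrib, Fintype.sum_eq_single j fun i hi => by
    simp [Function.update_of_ne hi]]
  simp

theorem varZi_const_add_sum {m : ℕ} (c : ℤ) (g : Fin m → Bool → ℤ) (j : Fin m)
    (w : Fin m → Bool) :
    varZi (fun v => c + ∑ i, g i (v i)) j w
      = (Tri.ofBool (!w j)).e * (g j (!w j) - g j (w j)) := by
  rw [varZi, Tri.mxnorZ_eq_e_mul, bvar_self_not, add_sub_add_left_eq_sub,
    Fintype.sum_apply_update_sub]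

theorem Tri.e_ofBool_not_mul_ind_beq_sub (x b : Bool) :
    (Tri.ofBool (!b)).e * (ind (x == !b) - ind (x == b)) = (Tri.ofBool x).e := by
  cases x <;> cases b <;> rfl

theorem xnor_neuron_weight_variation (m : ℕ) (x : Fin m → Bool) (w₀ : ℤ)
    (j : Fin m) (w : Fin m → Bool) :
    varZi (fun v => w₀ + ∑ i, ind ((x i) == (v i))) j w
      = Tri.e (Tri.ofBool (x j)) := by
  rw [varZi_const_add_sum w₀ (fun i b => ind (x i == b)),
    Tri.e_ofBool_not_mul_ind_beq_sub]
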